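/- Let g₀ ≥ 1, g = 2g₀, and let M be the 2g₀ × 2g₀ block matrix [[0, Id_{g₀}],[Id_{g₀}, 0]]. Suppose A is a 2g₀ × 2g₀ integer matrix with A M Aᵀ ≡ M (mod 2), and β, β̃ ∈ ℤ^{2g₀} satisfy β̃ = A β - (1/2)·diag(A M Aᵀ) (the diagonal vector of A M Aᵀ has even entries so this is an integer vector). Then β̃ᵀ M β̃ ≡ βᵀ M β (mod 4). -/

import Mathlib

/-!
Write `Mstd = U + Uᵀ` with `U = [[0, Id], [0, 0]]`, so that `xᵀ Mstd x = 2 q(x)` for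
`q(x) = xᵀ U x` and `diag (A Mstd Aᵀ) = 2 c` with `c = diag (A U Aᵀ)`. The claim becomes
`q(Aβ - c) ≡ q(β) (mod 2)`, a statement over `𝔽₂`. There `B = A mod 2` preserves the polar form
of `q`, so `q ∘ Bᵀ` differs from `q` by the linear form `x ↦ c ⬝ x`; together with
`q ∘ Mstd = q` this gives `q(Bx + c) = q(x) + q(c)`. Finally `q(c) = 0`, because the affine
bijection `x ↦ Bx + c` preserves the Gauss sum `∑ₓ (-1)^q(x)`, which is nonzero since its square
is `2ⁿ` for a nondegenerate form (this is the invariance of the Arf invariant).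
-/

open Matrix

/-- The standard orthosymmetric matrix of size `g` with `λ = 2 * l0`:
block `[[0, Id],[Id, 0]]` in the upper-left `2*l0` corner, zero elsewhere. -/
def Mstd (g l0 : ℕ) : Matrix (Fin g) (Fin g) ℤ :=
  Matrix.of fun i j =>
    if ((i : ℕ) + l0 = (j : ℕ) ∧ (j : ℕ) < 2 * l0) ∨
       ((j : ℕ) + l0 = (i : ℕ) ∧ (i : ℕ) < 2 * l0) then 1 else 0

namespace QuadFormMod2

variable {ι R : Type*} [Fintype ι] [CommRing R]

def quadForm (U : Matrix ι ι R) (x : ι → R) : R := x ⬝ᵥ U *ᵥ x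

lemma quadForm_transpose (U : Matrix ι ι R) (x : ι → R) :
    quadForm Uᵀ x = quadForm U x := by
  rw [quadForm, quadForm, mulVec_transpose, dotProduct_comm, dotProduct_mulVec]

lemma quadForm_add_transpose (U : Matrix ι ι R) (x : ι → R) :
    quadForm (U + Uᵀ) x = 2 * quadForm U x := by
  rw [quadForm, add_mulVec, dotProduct_add, ← quadForm, ← quadForm, quadForm_transpose]
  ring

lemma quadForm_add (U : Matrix ι ι R) (x y : ι → R) :
    quadForm U (x + y) = quadForm U x + quadForm U y + x ⬝ᵥ (U + Uᵀ) *ᵥ y := by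
  simp only [quadForm, mulVec_add, add_mulVec, dotProduct_add, add_dotProduct, mulVec_transpose]
  rw [dotProduct_mulVec y U x, dotProduct_comm (y ᵥ* U)]
  ring

lemma quadForm_mulVec (U B : Matrix ι ι R) (x : ι → R) :
    quadForm U (B *ᵥ x) = quadForm (Bᵀ * U * B) x := by
  rw [quadForm, quadForm, ← mulVec_mulVec, ← mulVec_mulVec, dotProduct_mulVec x Bᵀ,
    vecMul_transpose]

lemma quadForm_map {S : Type*} [CommRing S] (f : R →+* S) (U : Matrix ι ι R) (x : ι → R) :
    f (quadForm U x) = quadForm (U.map f) (f ∘ x) := by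
  rw [quadForm, quadForm, RingHom.map_dotProduct]
  congr 1
  ext i
  exact RingHom.map_mulVec f U x i

lemma diag_mul_add_transpose_mul_transpose (A U : Matrix ι ι R) (i : ι) :
    (A * (U + Uᵀ) * Aᵀ) i i = 2 * (A * U * Aᵀ) i i := by
  have : A * Uᵀ * Aᵀ = (A * U * Aᵀ)ᵀ := by
    simp only [transpose_mul, transpose_transpose, Matrix.mul_assoc]
  rw [mul_add, add_mul, Matrix.add_apply, this, transpose_apply]
  ring

variable [DecidableEq ι]

lemma transpose_mul_mul_eq_of_mul_mul_transpose_eq {J B : Matrix ι ι R} (hJ : J * J = 1)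
    (hB : B * J * Bᵀ = J) : Bᵀ * J * B = J := by
  have hinv : B * (J * Bᵀ * J) = 1 := by
    rw [← Matrix.mul_assoc, ← Matrix.mul_assoc, hB, hJ]
  have hinv' := mul_eq_one_comm.mp hinv
  calc Bᵀ * J * B = J * (J * Bᵀ * J * B) := by
        simp only [← Matrix.mul_assoc, hJ, Matrix.one_mul]
    _ = J := by rw [hinv', Matrix.mul_one]

lemma sum_sum_eq_sum_diag_of_symm [CharP R 2] (F : ι → ι → R) (hF : ∀ i j, F i j = F j i) :
    ∑ i, ∑ j, F i j = ∑ i, F i i := by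
  have hoff : ∑ p : ι × ι, (if p.1 = p.2 then 0 else F p.1 p.2) = 0 := by
    refine Finset.sum_ninvolution Prod.swap (fun p => ?_) (fun p hp h => hp ?_) (fun _ => by simp)
      Prod.swap_swap
    · simp only [Prod.fst_swap, Prod.snd_swap, hF p.2 p.1, eq_comm (a := p.2)]
      split_ifs <;> simp [CharTwo.add_self_eq_zero]
    · exact if_pos (congrArg Prod.fst h).symm
  calc ∑ i, ∑ j, F i j
      = ∑ i, ∑ j, ((if i = j then F i j else 0) + (if i = j then 0 else F i j)) := by
        simp only [ite_add_ite, add_zero, zero_add, ite_self]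
    _ = ∑ i, F i i := by
        rw [Fintype.sum_prod_type] at hoff
        simp only [Finset.sum_add_distrib, Finset.sum_ite_eq, Finset.mem_univ, if_true, hoff,
          add_zero]

def negOnePow (a : ZMod 2) : ℤ := (-1) ^ a.val

lemma negOnePow_add (a b : ZMod 2) : negOnePow (a + b) = negOnePow a * negOnePow b := by
  revert a b; decide

@[simp] lemma negOnePow_zero : negOnePow 0 = 1 := rfl
@[simp] lemma negOnePow_one : negOnePow 1 = -1 := rfl

lemma negOnePow_eq_one_iff {a : ZMod 2} : negOnePow a = 1 ↔ a = 0 := by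
  revert a; decide

lemma negOnePow_mul_self (a : ZMod 2) : negOnePow a * negOnePow a = 1 := by
  revert a; decide

lemma quadForm_eq_sum_diag_of_transpose_eq {S : Matrix ι ι (ZMod 2)} (hS : Sᵀ = S)
    (x : ι → ZMod 2) : quadForm S x = S.diag ⬝ᵥ x := by
  have hsymm : ∀ i j, x i * S i j * x j = x j * S j i * x i := fun i j => by
    rw [← transpose_apply S j i, hS]; ring
  simp only [quadForm, dotProduct, mulVec, Finset.mul_sum, ← mul_assoc]
  rw [sum_sum_eq_sum_diag_of_symm _ hsymm]
  refine Finset.sum_congr rfl fun i _ => ?_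
  rw [diag_apply, mul_comm (x i), mul_assoc, ← sq, ZMod.pow_card]

lemma quadForm_transpose_mulVec {U B : Matrix ι ι (ZMod 2)} (hU : ∀ i, U i i = 0)
    (hB : B * (U + Uᵀ) * Bᵀ = U + Uᵀ) (y : ι → ZMod 2) :
    quadForm U (Bᵀ *ᵥ y) = quadForm U y + (B * U * Bᵀ).diag ⬝ᵥ y := by
  set P := B * U * Bᵀ
  have hP : P + Pᵀ = U + Uᵀ := by
    rw [← hB]; simp only [P, transpose_mul, transpose_transpose, Matrix.mul_add,
      Matrix.add_mul, Matrix.mul_assoc]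
  have hS : (P - U)ᵀ = P - U := by
    ext i j
    have hij := congrFun (congrFun hP i) j
    simp only [Matrix.add_apply, transpose_apply, Matrix.sub_apply] at hij ⊢
    linear_combination (norm := (ring_nf; reduce_mod_char)) hij
  have hdiag : (P - U).diag = P.diag := by
    ext i; simp [hU]
  calc quadForm U (Bᵀ *ᵥ y) = quadForm P y := by rw [quadForm_mulVec, transpose_transpose]
    _ = quadForm U y + quadForm (P - U) y := by
        simp only [quadForm, ← dotProduct_add, ← add_mulVec, add_sub_cancel]
    _ = quadForm U y + P.diag ⬝ᵥ y := by
        rw [quadForm_eq_sum_diag_of_transpose_eq hS, hdiag]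

lemma sum_negOnePow_dotProduct (w : ι → ZMod 2) :
    ∑ x, negOnePow (x ⬝ᵥ w) = if w = 0 then 2 ^ Fintype.card ι else 0 := by
  split_ifs with hw
  · simp [hw]
  obtain ⟨i, hi⟩ := Function.ne_iff.mp hw
  have hwi : w i = 1 := (by decide : ∀ a : ZMod 2, a ≠ 0 → a = 1) _ hi
  have hflip : ∑ x : ι → ZMod 2, negOnePow ((x + Pi.single i 1) ⬝ᵥ w) =
      -∑ x, negOnePow (x ⬝ᵥ w) := by
    rw [← Finset.sum_neg_distrib]
    refine Finset.sum_congr rfl fun x _ => ?_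
    simp [add_dotProduct, hwi, negOnePow_add]
  have hshift := Equiv.sum_comp (Equiv.addRight (Pi.single i 1)) fun x => negOnePow (x ⬝ᵥ w)
  simp only [Equiv.coe_addRight] at hshift
  linarith

def gaussSum (U : Matrix ι ι (ZMod 2)) : ℤ := ∑ x, negOnePow (quadForm U x)

lemma gaussSum_sq {U : Matrix ι ι (ZMod 2)} (hU : ∀ z, (U + Uᵀ) *ᵥ z = 0 → z = 0) :
    gaussSum U ^ 2 = 2 ^ Fintype.card ι := by
  calc gaussSum U ^ 2
      = ∑ x, ∑ z, negOnePow (quadForm U x) * negOnePow (quadForm U (x + z)) := by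
        rw [sq, gaussSum, Finset.sum_mul_sum]
        exact Finset.sum_congr rfl fun x _ => (Equiv.sum_comp (Equiv.addLeft x) _).symm
    _ = ∑ z, negOnePow (quadForm U z) * ∑ x, negOnePow (x ⬝ᵥ (U + Uᵀ) *ᵥ z) := by
        rw [Finset.sum_comm]
        refine Finset.sum_congr rfl fun z _ => ?_
        rw [Finset.mul_sum]
        refine Finset.sum_congr rfl fun x _ => ?_
        rw [quadForm_add, negOnePow_add, negOnePow_add, ← mul_assoc, ← mul_assoc,
          negOnePow_mul_self, one_mul]
    _ = 2 ^ Fintype.card ι := by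
        have hker : ∀ z, (U + Uᵀ) *ᵥ z = 0 ↔ z = 0 := fun z =>
          ⟨hU z, by rintro rfl; exact mulVec_zero _⟩
        simp only [sum_negOnePow_dotProduct, hker, mul_ite, mul_zero, Finset.sum_ite_eq',
          Finset.mem_univ, if_true]
        simp [quadForm]

lemma eq_zero_of_quadForm_comp_eq_add {U : Matrix ι ι (ZMod 2)}
    (hU : ∀ z, (U + Uᵀ) *ᵥ z = 0 → z = 0) {f : (ι → ZMod 2) → ι → ZMod 2}
    (hf : Function.Bijective f) {k : ZMod 2} (hfk : ∀ x, quadForm U (f x) = quadForm U x + k) :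
    k = 0 := by
  have hγ : gaussSum U ≠ 0 := by
    rw [← pow_ne_zero_iff two_ne_zero, gaussSum_sq hU]
    positivity
  have hinv : negOnePow k * gaussSum U = 1 * gaussSum U :=
    calc negOnePow k * gaussSum U = ∑ x, negOnePow (quadForm U (f x)) := by
          simp only [gaussSum, Finset.mul_sum, hfk, negOnePow_add, mul_comm]
      _ = 1 * gaussSum U := by
          rw [hf.sum_comp fun y => negOnePow (quadForm U y), one_mul, gaussSum]
  exact negOnePow_eq_one_iff.mp (mul_right_cancel₀ hγ hinv)

theorem quadForm_mulVec_add_diag {U J B : Matrix ι ι (ZMod 2)} (hUJ : U + Uᵀ = J)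
    (hU : ∀ i, U i i = 0) (hJ : J * J = 1) (hJU : J * U * J = Uᵀ) (hB : B * J * Bᵀ = J)
    (x : ι → ZMod 2) : quadForm U (B *ᵥ x + (B * U * Bᵀ).diag) = quadForm U x := by
  set c := (B * U * Bᵀ).diag
  have hJsymm : Jᵀ = J := by rw [← hUJ, transpose_add, transpose_transpose, add_comm]
  have hBt : Bᵀ * J * B = J := transpose_mul_mul_eq_of_mul_mul_transpose_eq hJ hB
  have hJinj : ∀ z, (U + Uᵀ) *ᵥ z = 0 → z = 0 := fun z hz => by
    rw [← one_mulVec z, ← hJ, ← mulVec_mulVec, ← hUJ, hz, mulVec_zero]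
  have hrow := quadForm_transpose_mulVec hU (hUJ ▸ hB)
  have hQJ : ∀ y, quadForm U (J *ᵥ y) = quadForm U y := fun y => by
    rw [quadForm_mulVec, hJsymm, hJU, quadForm_transpose]
  -- `J` is an isometry of `q` and `Bᵀ J B = J`, so the formula for `q ∘ Bᵀ` yields one for `q ∘ B`.
  have hcol : ∀ x, quadForm U x = quadForm U (B *ᵥ x) + c ⬝ᵥ J *ᵥ B *ᵥ x := fun x => by
    have hJx : J *ᵥ x = Bᵀ *ᵥ J *ᵥ B *ᵥ x := by
      rw [mulVec_mulVec, mulVec_mulVec, hBt]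
    rw [← hQJ x, hJx, hrow, hQJ]
  have hshift : ∀ x, quadForm U (B *ᵥ x + c) = quadForm U x + quadForm U c := fun x => by
    rw [quadForm_add, hUJ, dotProduct_mulVec, ← mulVec_transpose, hJsymm, dotProduct_comm]
    linear_combination -hcol x
  have hleft : (J * Bᵀ * J) * B = 1 := by
    rw [Matrix.mul_assoc, Matrix.mul_assoc, ← Matrix.mul_assoc Bᵀ, hBt, hJ]
  have hbij : Function.Bijective fun x => B *ᵥ x + c := by
    refine Finite.injective_iff_bijective.mp fun x y hxy => ?_
    have hB : B *ᵥ x = B *ᵥ y := add_right_cancel hxy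
    simpa [mulVec_mulVec, hleft] using congrArg ((J * Bᵀ * J) *ᵥ ·) hB
  rw [hshift, eq_zero_of_quadForm_comp_eq_add hJinj hbij hshift, add_zero]

theorem quadForm_mulVec_sub_diag_modEq_two {U J A : Matrix ι ι ℤ} (hUJ : U + Uᵀ = J)
    (hU : ∀ i, U i i = 0) (hJ : J * J = 1) (hJU : J * U * J = Uᵀ)
    (hA : ∀ i j, (A * J * Aᵀ) i j ≡ J i j [ZMOD 2]) (β : ι → ℤ) :
    quadForm U (A *ᵥ β - (A * U * Aᵀ).diag) ≡ quadForm U β [ZMOD 2] := by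
  set f := Int.castRingHom (ZMod 2)
  refine (ZMod.intCast_eq_intCast_iff _ _ 2).mp ?_
  change f (quadForm U _) = f (quadForm U β)
  have hcast : f ∘ (A *ᵥ β - (A * U * Aᵀ).diag) =
      A.map f *ᵥ (f ∘ β) + (A.map f * U.map f * (A.map f)ᵀ).diag := by
    ext i
    rw [Function.comp_apply, Pi.sub_apply, map_sub, RingHom.map_mulVec, diag_apply,
      ← transpose_map, ← Matrix.map_mul, ← Matrix.map_mul, sub_eq_add_neg,
      ZMod.neg_eq_self_mod_two]
    rfl
  rw [quadForm_map, quadForm_map, hcast]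
  refine quadForm_mulVec_add_diag (J := J.map f) ?_ (fun i => by simp [hU]) ?_ ?_ ?_ _
  · rw [← hUJ, Matrix.map_add _ (map_add f), transpose_map]
  · rw [← Matrix.map_mul, hJ, Matrix.map_one _ (map_zero f) (map_one f)]
  · rw [← Matrix.map_mul, ← Matrix.map_mul, hJU, transpose_map]
  · ext i j
    rw [← transpose_map, ← Matrix.map_mul, ← Matrix.map_mul]
    exact (ZMod.intCast_eq_intCast_iff _ _ _).mpr (hA i j)

theorem dotProduct_mulVec_modEq_four {U J A : Matrix ι ι ℤ} (hUJ : U + Uᵀ = J)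
    (hU : ∀ i, U i i = 0) (hJ : J * J = 1) (hJU : J * U * J = Uᵀ)
    (hA : ∀ i j, (A * J * Aᵀ) i j ≡ J i j [ZMOD 2]) {β βt : ι → ℤ}
    (hβt : ∀ i, 2 * βt i = 2 * (A *ᵥ β) i - (A * J * Aᵀ) i i) :
    βt ⬝ᵥ J *ᵥ βt ≡ β ⬝ᵥ J *ᵥ β [ZMOD 4] := by
  have hβt' : βt = A *ᵥ β - (A * U * Aᵀ).diag := funext fun i => by
    have hi := hβt i
    rw [← hUJ, diag_mul_add_transpose_mul_transpose] at hi
    simp only [Pi.sub_apply, diag_apply]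
    linarith
  rw [← hUJ]
  change quadForm (U + Uᵀ) βt ≡ quadForm (U + Uᵀ) β [ZMOD 2 * 2]
  rw [quadForm_add_transpose, quadForm_add_transpose, hβt']
  exact (quadForm_mulVec_sub_diag_modEq_two hUJ hU hJ hJU hA β).mul_left' (c := 2)

end QuadFormMod2

def finSumFinEquivTwoMul (n : ℕ) : Fin n ⊕ Fin n ≃ Fin (2 * n) :=
  finSumFinEquiv.trans (finCongr (two_mul n).symm)

lemma Mstd_eq_submatrix (n : ℕ) :
    Mstd (2 * n) n =
      (fromBlocks 0 1 1 0 : Matrix (Fin n ⊕ Fin n) (Fin n ⊕ Fin n) ℤ).submatrix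
        (finSumFinEquivTwoMul n).symm (finSumFinEquivTwoMul n).symm := by
  ext i j
  obtain ⟨s, rfl⟩ := (finSumFinEquivTwoMul n).surjective i
  obtain ⟨t, rfl⟩ := (finSumFinEquivTwoMul n).surjective j
  simp only [submatrix_apply, Equiv.symm_apply_apply]
  cases s <;> cases t <;> simp [Mstd, finSumFinEquivTwoMul, one_apply, Fin.ext_iff] <;> omega

def MstdUpper (n : ℕ) : Matrix (Fin (2 * n)) (Fin (2 * n)) ℤ :=
  (fromBlocks 0 1 0 0 : Matrix (Fin n ⊕ Fin n) (Fin n ⊕ Fin n) ℤ).submatrix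
    (finSumFinEquivTwoMul n).symm (finSumFinEquivTwoMul n).symm

lemma MstdUpper_add_transpose (n : ℕ) : MstdUpper n + (MstdUpper n)ᵀ = Mstd (2 * n) n := by
  rw [Mstd_eq_submatrix, MstdUpper, transpose_submatrix]
  change ((fromBlocks 0 1 0 0 + (fromBlocks 0 1 0 0)ᵀ :
    Matrix (Fin n ⊕ Fin n) (Fin n ⊕ Fin n) ℤ).submatrix _ _) = _
  rw [fromBlocks_transpose, fromBlocks_add]
  simp

lemma MstdUpper_apply_self (n : ℕ) (i : Fin (2 * n)) : MstdUpper n i i = 0 := by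
  rw [MstdUpper, submatrix_apply]
  cases (finSumFinEquivTwoMul n).symm i <;> simp

lemma Mstd_mul_self (n : ℕ) : Mstd (2 * n) n * Mstd (2 * n) n = 1 := by
  rw [Mstd_eq_submatrix, submatrix_mul_equiv, fromBlocks_multiply]
  simp

lemma Mstd_mul_MstdUpper_mul_Mstd (n : ℕ) :
    Mstd (2 * n) n * MstdUpper n * Mstd (2 * n) n = (MstdUpper n)ᵀ := by
  rw [Mstd_eq_submatrix, MstdUpper, submatrix_mul_equiv, submatrix_mul_equiv,
    fromBlocks_multiply, fromBlocks_multiply, transpose_submatrix, fromBlocks_transpose]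
  simp

theorem stmt0 (g0 : ℕ)
    (A : Matrix (Fin (2 * g0)) (Fin (2 * g0)) ℤ)
    (hA : ∀ i j, (A * Mstd (2 * g0) g0 * Aᵀ) i j ≡ Mstd (2 * g0) g0 i j [ZMOD 2])
    (β βt : Fin (2 * g0) → ℤ)
    (hβt : ∀ i, 2 * βt i = 2 * (A.mulVec β) i - (A * Mstd (2 * g0) g0 * Aᵀ) i i) :
    βt ⬝ᵥ (Mstd (2 * g0) g0).mulVec βt ≡ β ⬝ᵥ (Mstd (2 * g0) g0).mulVec β [ZMOD 4] :=
  QuadFormMod2.dotProduct_mulVec_modEq_four (MstdUpper_add_transpose g0) (MstdUpper_apply_self g0)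
    (Mstd_mul_self g0) (Mstd_mul_MstdUpper_mul_Mstd g0) hA hβt
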